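/- arXiv:1911.08632 — 5 statements merged into one kernel-verified Lean document; each statement's English description precedes it below -/
import Mathlib

section
/- Flow graph composition is congruent with flow interface composition: if flow graphs H1 and H2 have interfaces I1 and I2 respectively, and their disjoint union H1 ⊙ H2 is a flow graph, then its interface equals I1 ⊕ I2; conversely, if I1 ⊕ I2 is defined, then the disjoint union of H1 and H2 is a flow graph with interface I1 ⊕ I2. -/
def FlowEqn {ι M : Type*} [AddCommMonoid M] (N : Finset ι)
    (e : ι → ι → M → M) (inf flo : ι → M) : Prop :=
  ∀ n ∈ N, flo n = inf n + ∑ n' ∈ N, e n' n (flo n')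

/-- A flow interface: a domain, an inflow, and an outflow. -/
structure Intf (ι M : Type*) where
  dom : Finset ι
  inflow : ι → M
  outflow : ι → M

/-- The outflow of the graph (N, e, flo) at a node n. -/
def outflowOf {ι M : Type*} [AddCommMonoid M] (N : Finset ι)
    (e : ι → ι → M → M) (flo : ι → M) (n : ι) : M :=
  ∑ n' ∈ N, e n' n (flo n')

/-- I is the interface of the flow graph (N, e, flo): its domain is N, its inflow
satisfies the flow equation, and its outflow is the outflow of the graph. -/
def IsIntf {ι M : Type*} [AddCommMonoid M] (N : Finset ι)
    (e : ι → ι → M → M) (flo : ι → M) (I : Intf ι M) : Prop :=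
  I.dom = N ∧ FlowEqn N e I.inflow flo ∧ ∀ n ∉ N, I.outflow n = outflowOf N e flo n

/-- I is the composition I1 ⊕ I2 of flow interfaces. -/
def IntComp {ι M : Type*} [AddCommMonoid M] [DecidableEq ι] (I1 I2 I : Intf ι M) : Prop :=
  Disjoint I1.dom I2.dom ∧ I.dom = I1.dom ∪ I2.dom ∧
  (∀ n ∈ I1.dom, I1.inflow n = I.inflow n + I2.outflow n) ∧
  (∀ n ∈ I2.dom, I2.inflow n = I.inflow n + I1.outflow n) ∧
  (∀ n ∉ I.dom, I.outflow n = I1.outflow n + I2.outflow n)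

/-- The edge labelling of the disjoint union of two graphs. -/
def unionE {ι M : Type*} [DecidableEq ι] (N1 : Finset ι)
    (e1 e2 : ι → ι → M → M) : ι → ι → M → M :=
  fun a b => if a ∈ N1 then e1 a b else e2 a b

/-- The flow of the disjoint union of two graphs. -/
def unionFlow {ι M : Type*} [DecidableEq ι] (N1 : Finset ι)
    (flo1 flo2 : ι → M) : ι → M :=
  fun a => if a ∈ N1 then flo1 a else flo2 a

/-!
The outflow of the union at any node is the sum of the outflows of the two components. Hence, at
a node of `H1`, the flow equation of the union reads `flo = in + out1 + out2` while that of `H1`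
reads `flo = in1 + out1`; cancelling `out1`, the union satisfies its flow equation with inflow `in`
exactly when `in1 = in + out2`, which is the inflow condition of `I1 ⊕ I2`.
-/

section FlowGraphUnion

variable {ι M : Type*} {n : ι} {N N1 N2 : Finset ι} {e e1 e2 : ι → ι → M → M}
  {flo flo1 flo2 inf inf1 inf2 : ι → M} {I I1 I2 : Intf ι M}

theorem unionFlow_of_mem [DecidableEq ι] (hn : n ∈ N1) : unionFlow N1 flo1 flo2 n = flo1 n :=
  if_pos hn

theorem unionFlow_of_notMem [DecidableEq ι] (hn : n ∉ N1) : unionFlow N1 flo1 flo2 n = flo2 n :=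
  if_neg hn

variable [AddCommMonoid M]

theorem flowEqn_iff : FlowEqn N e inf flo ↔ ∀ n ∈ N, flo n = inf n + outflowOf N e flo n :=
  Iff.rfl

theorem eq_add_add_iff [IsLeftCancelAdd M] {a b c d : M} : a + b = c + (b + d) ↔ a = c + d := by
  rw [add_left_comm, add_comm a, add_right_inj]

theorem IsIntf.outflow_eq (hI : IsIntf N e flo I) (hn : n ∉ N) :
    I.outflow n = outflowOf N e flo n :=
  hI.2.2 n hn

variable [DecidableEq ι]

theorem outflowOf_union (hdisj : Disjoint N1 N2) (n : ι) :
    outflowOf (N1 ∪ N2) (unionE N1 e1 e2) (unionFlow N1 flo1 flo2) n =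
      outflowOf N1 e1 flo1 n + outflowOf N2 e2 flo2 n := by
  rw [outflowOf, Finset.sum_union hdisj]
  congr 1
  · refine Finset.sum_congr rfl fun m hm => ?_
    rw [unionE, if_pos hm, unionFlow_of_mem hm]
  · refine Finset.sum_congr rfl fun m hm => ?_
    have hm1 : m ∉ N1 := Finset.disjoint_right.mp hdisj hm
    rw [unionE, if_neg hm1, unionFlow_of_notMem hm1]

theorem flowEqn_union_iff [IsLeftCancelAdd M] (hdisj : Disjoint N1 N2)
    (hf1 : FlowEqn N1 e1 inf1 flo1) (hf2 : FlowEqn N2 e2 inf2 flo2) :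
    FlowEqn (N1 ∪ N2) (unionE N1 e1 e2) inf (unionFlow N1 flo1 flo2) ↔
      (∀ n ∈ N1, inf1 n = inf n + outflowOf N2 e2 flo2 n) ∧
        ∀ n ∈ N2, inf2 n = inf n + outflowOf N1 e1 flo1 n := by
  rw [flowEqn_iff] at hf1 hf2
  simp only [flowEqn_iff, Finset.forall_mem_union, outflowOf_union hdisj]
  refine and_congr (forall₂_congr fun n hn => ?_) (forall₂_congr fun n hn => ?_)
  · rw [unionFlow_of_mem hn, hf1 n hn, eq_add_add_iff]
  · rw [unionFlow_of_notMem (Finset.disjoint_right.mp hdisj hn), hf2 n hn,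
      add_comm (outflowOf N1 e1 flo1 n), eq_add_add_iff]

theorem intComp_of_isIntf_union [IsLeftCancelAdd M] (hdisj : Disjoint N1 N2)
    (hI1 : IsIntf N1 e1 flo1 I1) (hI2 : IsIntf N2 e2 flo2 I2)
    (hI : IsIntf (N1 ∪ N2) (unionE N1 e1 e2) (unionFlow N1 flo1 flo2) I) :
    IntComp I1 I2 I := by
  obtain ⟨hin1, hin2⟩ := (flowEqn_union_iff hdisj hI1.2.1 hI2.2.1).mp hI.2.1
  unfold IntComp
  rw [hI1.1, hI2.1, hI.1]
  refine ⟨hdisj, rfl, fun n hn => ?_, fun n hn => ?_, fun n hn => ?_⟩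
  · rw [hin1 n hn, hI2.outflow_eq (Finset.disjoint_left.mp hdisj hn)]
  · rw [hin2 n hn, hI1.outflow_eq (Finset.disjoint_right.mp hdisj hn)]
  · rw [hI.outflow_eq hn, outflowOf_union hdisj, hI1.outflow_eq (Finset.notMem_union.mp hn).1,
      hI2.outflow_eq (Finset.notMem_union.mp hn).2]

theorem isIntf_union_of_intComp [IsLeftCancelAdd M] (hI1 : IsIntf N1 e1 flo1 I1)
    (hI2 : IsIntf N2 e2 flo2 I2) (hI : IntComp I1 I2 I) :
    IsIntf (N1 ∪ N2) (unionE N1 e1 e2) (unionFlow N1 flo1 flo2) I := by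
  obtain ⟨hdisj, hd, hin1, hin2, hout⟩ := hI
  simp only [hI1.1, hI2.1] at hdisj hd hin1 hin2
  refine ⟨hd, (flowEqn_union_iff hdisj hI1.2.1 hI2.2.1).mpr
    ⟨fun n hn => ?_, fun n hn => ?_⟩, fun n hn => ?_⟩
  · rw [hin1 n hn, hI2.outflow_eq (Finset.disjoint_left.mp hdisj hn)]
  · rw [hin2 n hn, hI1.outflow_eq (Finset.disjoint_right.mp hdisj hn)]
  · rw [hout n (hd ▸ hn), outflowOf_union hdisj, ← hI1.outflow_eq (Finset.notMem_union.mp hn).1,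
    ← hI2.outflow_eq (Finset.notMem_union.mp hn).2]

end FlowGraphUnion

theorem stmt3_general {ι M : Type*} [AddCommMonoid M] [DecidableEq ι]
    (hcanc : ∀ m1 m2 m3 : M, m1 + m2 = m1 + m3 → m2 = m3)
    (N1 N2 : Finset ι) (e1 e2 : ι → ι → M → M) (flo1 flo2 : ι → M)
    (hdisj : Disjoint N1 N2)
    (I1 I2 : Intf ι M)
    (hI1 : IsIntf N1 e1 flo1 I1) (hI2 : IsIntf N2 e2 flo2 I2) :
    (∀ infU, FlowEqn (N1 ∪ N2) (unionE N1 e1 e2) infU (unionFlow N1 flo1 flo2) →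
        ∃ I, IsIntf (N1 ∪ N2) (unionE N1 e1 e2) (unionFlow N1 flo1 flo2) I ∧
          IntComp I1 I2 I) ∧
    (∀ I, IntComp I1 I2 I →
        ∃ infU, FlowEqn (N1 ∪ N2) (unionE N1 e1 e2) infU (unionFlow N1 flo1 flo2) ∧
          IsIntf (N1 ∪ N2) (unionE N1 e1 e2) (unionFlow N1 flo1 flo2) I) := by
  have : IsLeftCancelAdd M := ⟨fun a b c => hcanc a b c⟩
  refine ⟨fun infU hU => ?_, fun I hI => ?_⟩
  · let I : Intf ι M :=
      ⟨N1 ∪ N2, infU, outflowOf (N1 ∪ N2) (unionE N1 e1 e2) (unionFlow N1 flo1 flo2)⟩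
    have hIU : IsIntf (N1 ∪ N2) (unionE N1 e1 e2) (unionFlow N1 flo1 flo2) I :=
      ⟨rfl, hU, fun _ _ => rfl⟩
    exact ⟨I, hIU, intComp_of_isIntf_union hdisj hI1 hI2 hIU⟩
  · have hIU := isIntf_union_of_intComp hI1 hI2 hI
    exact ⟨I.inflow, hIU.2.1, hIU⟩

/-- Congruence of flow graph composition and interface composition: if the disjoint
union of flow graphs H1, H2 is a flow graph then its interface is I1 ⊕ I2; conversely
if I1 ⊕ I2 is defined then the disjoint union is a flow graph with interface I1 ⊕ I2. -/
theorem stmt3 {ι M : Type*} [AddCommMonoid M] [DecidableEq ι]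
    (hcanc : ∀ m1 m2 m3 : M, m1 + m2 = m1 + m3 → m2 = m3)
    (N1 N2 : Finset ι) (e1 e2 : ι → ι → M → M) (flo1 flo2 : ι → M)
    (hdisj : Disjoint N1 N2)
    (hFG1 : ∃ inf1, FlowEqn N1 e1 inf1 flo1)
    (hFG2 : ∃ inf2, FlowEqn N2 e2 inf2 flo2)
    (I1 I2 : Intf ι M)
    (hI1 : IsIntf N1 e1 flo1 I1) (hI2 : IsIntf N2 e2 flo2 I2) :
    (∀ infU, FlowEqn (N1 ∪ N2) (unionE N1 e1 e2) infU (unionFlow N1 flo1 flo2) →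
        ∃ I, IsIntf (N1 ∪ N2) (unionE N1 e1 e2) (unionFlow N1 flo1 flo2) I ∧
          IntComp I1 I2 I) ∧
    (∀ I, IntComp I1 I2 I →
        ∃ infU, FlowEqn (N1 ∪ N2) (unionE N1 e1 e2) infU (unionFlow N1 flo1 flo2) ∧
          IsIntf (N1 ∪ N2) (unionE N1 e1 e2) (unionFlow N1 flo1 flo2) I) :=
  stmt3_general hcanc N1 N2 e1 e2 flo1 flo2 hdisj I1 I2 hI1 hI2
end

section
/- The set of flow interfaces with interface composition ⊕ and the empty interface forms a separation algebra: ⊕ is a partial, commutative, associative operation with the empty interface as identity, and ⊕ is cancellative (I1 ⊕ I2 = I1 ⊕ I3 with both defined implies I2 = I3). -/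
/-- The empty interface. -/
def emptyIntf (ι M : Type*) [AddCommMonoid M] : Intf ι M :=
  ⟨∅, fun _ => 0, fun _ => 0⟩

namespace IntComp

variable {ι M : Type*} [AddCommMonoid M] [DecidableEq ι]

theorem symm {I1 I2 I : Intf ι M} (h : IntComp I1 I2 I) : IntComp I2 I1 I := by
  obtain ⟨hdisj, hdom, hin1, hin2, hout⟩ := h
  exact ⟨hdisj.symm, hdom.trans (Finset.union_comm _ _), hin2, hin1,
    fun n hn => (hout n hn).trans (add_comm _ _)⟩

theorem comm {I1 I2 I : Intf ι M} : IntComp I1 I2 I ↔ IntComp I2 I1 I :=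
  ⟨symm, symm⟩

theorem empty_left (I : Intf ι M) : IntComp (emptyIntf ι M) I I :=
  ⟨Finset.disjoint_empty_left _, (Finset.empty_union _).symm,
    fun n hn => absurd hn (Finset.notMem_empty n), fun _ _ => (add_zero _).symm,
    fun _ _ => (zero_add _).symm⟩

/-- The middle interface `I₂ ⊕ I₃` of a composite `I = (I₁ ⊕ I₂) ⊕ I₃`. -/
def assocMid (I1 I2 I3 I : Intf ι M) : Intf ι M :=
  ⟨I2.dom ∪ I3.dom, fun n => I.inflow n + I1.outflow n, fun n => I2.outflow n + I3.outflow n⟩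

section Assoc

variable {I1 I2 I3 I12 I : Intf ι M} (h12 : IntComp I1 I2 I12) (h : IntComp I12 I3 I)
include h12 h

theorem assocMid_right : IntComp I2 I3 (assocMid I1 I2 I3 I) := by
  obtain ⟨-, hdom12, -, hin2, hout12⟩ := h12
  obtain ⟨hdisj, hdom, hin12, hin3, -⟩ := h
  have h2sub : I2.dom ⊆ I12.dom := hdom12 ▸ Finset.subset_union_right
  refine ⟨Finset.disjoint_of_subset_left h2sub hdisj, rfl, fun n hn => ?_, fun n hn => ?_,
    fun _ _ => rfl⟩
  · rw [hin2 n hn, hin12 n (h2sub hn)]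
    dsimp only [assocMid]
    abel
  · rw [hin3 n hn, hout12 n (Finset.disjoint_right.mp hdisj hn)]
    dsimp only [assocMid]
    abel

theorem assocMid_left : IntComp I1 (assocMid I1 I2 I3 I) I := by
  obtain ⟨hdisj12, hdom12, hin1, -, hout12⟩ := h12
  obtain ⟨hdisj, hdom, hin12, -, hout⟩ := h
  have h1sub : I1.dom ⊆ I12.dom := hdom12 ▸ Finset.subset_union_left
  refine ⟨Finset.disjoint_union_right.mpr ⟨hdisj12, Finset.disjoint_of_subset_left h1sub hdisj⟩,
    by rw [hdom, hdom12, Finset.union_assoc]; rfl, fun n hn => ?_, fun _ _ => rfl,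
    fun n hn => ?_⟩
  · rw [hin1 n hn, hin12 n (h1sub hn)]
    dsimp only [assocMid]
    abel
  · have hn12 : n ∉ I12.dom := fun h12n => hn (hdom ▸ Finset.mem_union_left _ h12n)
    rw [hout n hn, hout12 n hn12]
    dsimp only [assocMid]
    abel

theorem assoc : ∃ I23, IntComp I2 I3 I23 ∧ IntComp I1 I23 I :=
  ⟨assocMid I1 I2 I3 I, assocMid_right h12 h, assocMid_left h12 h⟩

end Assoc

theorem dom_right_eq_sdiff {I1 I2 I : Intf ι M} (h : IntComp I1 I2 I) :
    I2.dom = I.dom \ I1.dom := by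
  rw [h.2.1, Finset.union_sdiff_cancel_left h.1]

theorem outflow_right_eq [IsLeftCancelAdd M] {I1 I2 I3 I : Intf ι M}
    (h2 : IntComp I1 I2 I) (h3 : IntComp I1 I3 I) {n : ι} (hn : n ∉ I2.dom) :
    I2.outflow n = I3.outflow n := by
  obtain ⟨-, hdom, hin1, -, hout⟩ := h2
  obtain ⟨-, -, hin1', -, hout'⟩ := h3
  by_cases hn1 : n ∈ I1.dom
  · exact add_left_cancel ((hin1 n hn1).symm.trans (hin1' n hn1))
  · have hnI : n ∉ I.dom := by simp [hdom, hn1, hn]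
    exact add_left_cancel ((hout n hnI).symm.trans (hout' n hnI))

theorem right_cancel [IsLeftCancelAdd M] {I1 I2 I3 I : Intf ι M}
    (h2 : IntComp I1 I2 I) (h3 : IntComp I1 I3 I) :
    I2.dom = I3.dom ∧ (∀ n ∈ I2.dom, I2.inflow n = I3.inflow n) ∧
      (∀ n ∉ I2.dom, I2.outflow n = I3.outflow n) := by
  have hdom : I2.dom = I3.dom := h2.dom_right_eq_sdiff.trans h3.dom_right_eq_sdiff.symm
  refine ⟨hdom, fun n hn => ?_, fun n hn => outflow_right_eq h2 h3 hn⟩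
  rw [h2.2.2.2.1 n hn, h3.2.2.2.1 n (hdom ▸ hn)]

end IntComp

/-- Flow interfaces with interface composition form a separation algebra: the
(partial) composition is commutative, associative, has the empty interface as
identity, and is cancellative. -/
theorem stmt4 {ι M : Type*} [AddCommMonoid M] [DecidableEq ι]
    (hcanc : ∀ m1 m2 m3 : M, m1 + m2 = m1 + m3 → m2 = m3) :
    (∀ I1 I2 I : Intf ι M, IntComp I1 I2 I ↔ IntComp I2 I1 I) ∧
    (∀ I1 I2 I3 I12 I : Intf ι M, IntComp I1 I2 I12 → IntComp I12 I3 I →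
        ∃ I23, IntComp I2 I3 I23 ∧ IntComp I1 I23 I) ∧
    (∀ I : Intf ι M, IntComp (emptyIntf ι M) I I) ∧
    (∀ I1 I2 I3 I : Intf ι M, IntComp I1 I2 I → IntComp I1 I3 I →
        I2.dom = I3.dom ∧ (∀ n ∈ I2.dom, I2.inflow n = I3.inflow n) ∧
        (∀ n ∉ I2.dom, I2.outflow n = I3.outflow n)) := by
  have : IsLeftCancelAdd M := ⟨hcanc⟩
  exact ⟨fun _ _ _ => IntComp.comm, fun _ _ _ _ _ => IntComp.assoc, IntComp.empty_left,
    fun _ _ _ _ => IntComp.right_cancel⟩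
end

section
/- Path-expansion of the flow equation: let M be a commutative monoid, E a set of endomorphisms of M closed under + and ∘, (N, e) a finite graph with edge functions in E, and suppose FlowEqn(in, e, flow) holds. Then for every L ≥ 1 and n ∈ N, flow(n) = in(n) + Σ over nonempty paths n1,…,nk ∈ N with 1 ≤ k < L of e(nk, n)(…(e(n1, n2)(in(n1)))…) + Σ over n1,…,nL ∈ N of e(nL, n)(…(e(n1, n2)(flow(n1)))…). -/
/-- `chainFn e n1 [n2,…,nk] n m = e nk n (… (e n2 n3 (e n1 n2 m)) …)`:
propagate the value m along the path n1, n2, …, nk and finally to n. -/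
def chainFn {ι M : Type*} (e : ι → ι → M → M) : ι → List ι → ι → M → M
  | n1, [], n => e n1 n
  | n1, n2 :: rest, n => fun m => chainFn e n2 rest n (e n1 n2 m)

/-- The value contributed at node n by the path given by the (nonempty) list,
starting from the value of f at the first node of the path. -/
def pathVal {ι M : Type*} [Zero M] (e : ι → ι → M → M) (f : ι → M) (n : ι) :
    List ι → M
  | [] => 0
  | n1 :: rest => chainFn e n1 rest n (f n1)

lemma Finset.map_sum_of_nonempty {α M M' : Type*} [AddCommMonoid M] [AddCommMonoid M']
    {f : M → M'} (hf : ∀ a b, f (a + b) = f a + f b) {s : Finset α} (hs : s.Nonempty)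
    (g : α → M) : f (∑ x ∈ s, g x) = ∑ x ∈ s, f (g x) := by
  induction hs using Finset.Nonempty.cons_induction with
  | singleton a => simp
  | cons a s ha hs ih => rw [Finset.sum_cons, Finset.sum_cons, hf, ih]

lemma Fintype.sum_pi_fin_succ {α M : Type*} [Fintype α] [AddCommMonoid M] {k : ℕ}
    (f : (Fin (k + 1) → α) → M) : ∑ p, f p = ∑ a, ∑ q : Fin k → α, f (Fin.cons a q) := by
  rw [← Fintype.sum_prod_type' (fun a q => f (Fin.cons a q))]
  exact (Fintype.sum_equiv (Fin.consEquiv fun _ => α) _ _ fun _ => rfl).symm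

def pathSum {ι M : Type*} [AddCommMonoid M] (N : Finset ι) (e : ι → ι → M → M) (f : ι → M)
    (n : ι) (k : ℕ) : M :=
  ∑ p : Fin k → ↥N, pathVal e f n (List.ofFn fun i => (p i : ι))

section PathExpansion

variable {ι M : Type*} [AddCommMonoid M] {e : ι → ι → M → M}

lemma chainFn_add (he : ∀ a b x y, e a b (x + y) = e a b x + e a b y) :
    ∀ (n1 : ι) (l : List ι) (n : ι) (x y : M),
      chainFn e n1 l n (x + y) = chainFn e n1 l n x + chainFn e n1 l n y
  | n1, [], n, x, y => he n1 n x y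
  | n1, n2 :: rest, n, x, y => by
    simp only [chainFn]
    rw [he, chainFn_add he n2 rest n]

lemma pathVal_cons_of_flowEqn {N : Finset ι} {inf flo : ι → M} (hflow : FlowEqn N e inf flo)
    (he : ∀ a b x y, e a b (x + y) = e a b x + e a b y) {n1 : ι} (hn1 : n1 ∈ N)
    (rest : List ι) (n : ι) :
    pathVal e flo n (n1 :: rest) =
      pathVal e inf n (n1 :: rest) + ∑ n' ∈ N, pathVal e flo n (n' :: n1 :: rest) := by
  simp only [pathVal]
  rw [hflow n1 hn1, chainFn_add he, Finset.map_sum_of_nonempty (chainFn_add he _ _ _) ⟨n1, hn1⟩]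
  rfl

lemma sum_pi_fin_succ_ofFn (N : Finset ι) (F : List ι → M) (k : ℕ) :
    ∑ p : Fin (k + 1) → ↥N, F (List.ofFn fun i => (p i : ι)) =
      ∑ a : ↥N, ∑ q : Fin k → ↥N, F ((a : ι) :: List.ofFn fun i => (q i : ι)) := by
  rw [Fintype.sum_pi_fin_succ]
  simp only [List.ofFn_succ, Fin.cons_zero, Fin.cons_succ]

lemma pathSum_one (N : Finset ι) (f : ι → M) (n : ι) :
    pathSum N e f n 1 = ∑ n' ∈ N, e n' n (f n') := by
  rw [pathSum, sum_pi_fin_succ_ofFn, ← Finset.sum_coe_sort N]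
  simp [pathVal, chainFn]

lemma pathSum_succ_of_flowEqn {N : Finset ι} {inf flo : ι → M} (hflow : FlowEqn N e inf flo)
    (he : ∀ a b x y, e a b (x + y) = e a b x + e a b y) (n : ι) (k : ℕ) :
    pathSum N e flo n (k + 1) = pathSum N e inf n (k + 1) + pathSum N e flo n (k + 2) := by
  calc pathSum N e flo n (k + 1)
      = ∑ a : ↥N, ∑ q : Fin k → ↥N, (pathVal e inf n ((a : ι) :: List.ofFn fun i => (q i : ι))
          + ∑ n' : ↥N, pathVal e flo n (n' :: (a : ι) :: List.ofFn fun i => (q i : ι))) := by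
        rw [pathSum, sum_pi_fin_succ_ofFn]
        refine Finset.sum_congr rfl fun a _ => Finset.sum_congr rfl fun q _ => ?_
        rw [pathVal_cons_of_flowEqn hflow he a.2, ← Finset.sum_coe_sort N]
    _ = pathSum N e inf n (k + 1) + ∑ n' : ↥N, ∑ a : ↥N, ∑ q : Fin k → ↥N,
          pathVal e flo n (n' :: (a : ι) :: List.ofFn fun i => (q i : ι)) := by
        simp only [Finset.sum_add_distrib, pathSum, sum_pi_fin_succ_ofFn]
        congr 1
        exact (Finset.sum_congr rfl fun _ _ => Finset.sum_comm).trans Finset.sum_comm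
    _ = pathSum N e inf n (k + 1) + pathSum N e flo n (k + 2) := by
        congr 1
        rw [pathSum, sum_pi_fin_succ_ofFn]
        exact Finset.sum_congr rfl fun n' _ =>
          (sum_pi_fin_succ_ofFn N (fun l => pathVal e flo n ((n' : ι) :: l)) k).symm

end PathExpansion

theorem stmt9_general {ι M : Type*} [AddCommMonoid M] (N : Finset ι)
    (e : ι → ι → M → M) (inf flo : ι → M)
    (E : Set (M → M)) (hE : ∀ a b, e a b ∈ E)
    (hEendo : ∀ f ∈ E, ∀ a b : M, f (a + b) = f a + f b)
    (hflow : FlowEqn N e inf flo) (L : ℕ) (hL : 1 ≤ L) (n : ι) (hn : n ∈ N) :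
    flo n = inf n
      + ∑ k ∈ Finset.Ico 1 L, ∑ p : Fin k → ↥N,
          pathVal e inf n (List.ofFn fun i => (p i : ι))
      + ∑ p : Fin L → ↥N, pathVal e flo n (List.ofFn fun i => (p i : ι)) := by
  obtain ⟨K, rfl⟩ : ∃ K, L = K + 1 := ⟨L - 1, by omega⟩
  clear hL
  have he : ∀ a b x y, e a b (x + y) = e a b x + e a b y := fun a b => hEendo _ (hE a b)
  change flo n = inf n + ∑ k ∈ Finset.Ico 1 (K + 1), pathSum N e inf n k
    + pathSum N e flo n (K + 1)
  induction K with
  | zero => simpa [pathSum_one] using hflow n hn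
  | succ K ih =>
    rw [Finset.sum_Ico_succ_top (by omega), ih, pathSum_succ_of_flowEqn hflow he]
    abel

/-- Path-expansion of the flow equation. -/
theorem stmt9 {ι M : Type*} [AddCommMonoid M] (N : Finset ι)
    (e : ι → ι → M → M) (inf flo : ι → M)
    (E : Set (M → M)) (hE : ∀ a b, e a b ∈ E)
    (hEendo : ∀ f ∈ E, ∀ a b : M, f (a + b) = f a + f b)
    (hEcomp : ∀ f ∈ E, ∀ g ∈ E, (f ∘ g) ∈ E)
    (hEadd : ∀ f ∈ E, ∀ g ∈ E, (fun m => f m + g m) ∈ E)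
    (hflow : FlowEqn N e inf flo) (L : ℕ) (hL : 1 ≤ L) (n : ι) (hn : n ∈ N) :
    flo n = inf n
      + ∑ k ∈ Finset.Ico 1 L, ∑ p : Fin k → ↥N,
          pathVal e inf n (List.ofFn fun i => (p i : ι))
      + ∑ p : Fin L → ↥N, pathVal e flo n (List.ofFn fun i => (p i : ι)) :=
  stmt9_general N e inf flo E hE hEendo hflow L hL n hn
end

section
/- Nilpotent edge functions give unique flows: let (M, +, 0) be a positive cancellative commutative monoid and E a closed set of endomorphisms of M that is nilpotent, i.e., there exists p > 1 with e^p = 0 (the constant-zero function) for every e ∈ E. Then for every finite graph (N, e) labelled by E and every inflow in : N → M, there is at most one flow : N → M satisfying FlowEqn(in, e, flow). -/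
/-!
Unfolding the flow equation `k` times writes `flow n` as a term that depends only on the inflow,
plus, for every `n'`, the sum over all paths from `n'` to `n` with `k + 1` edges of the composed
edge maps, applied to `flow n'`. Each such path sum is an additive summand of `s^[k+1]`, where
`s = ∑_{a,b} e a b` lies in `E` since `E` is closed under addition. Nilpotence gives `s^[p] = 0`,
and in a positive monoid every summand of `0` vanishes, so after `p - 1` unfoldings `flow n` is
determined by the inflow alone.
-/

section IsSummand

variable {M : Type*} [AddCommMonoid M]

def IsSummand (x y : M) : Prop := ∃ r, y = x + r

theorem IsSummand.trans {x y z : M} (hxy : IsSummand x y) (hyz : IsSummand y z) :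
    IsSummand x z := by
  obtain ⟨r, rfl⟩ := hxy
  obtain ⟨s, rfl⟩ := hyz
  exact ⟨r + s, add_assoc x r s⟩

theorem IsSummand.map {M' F : Type*} [AddCommMonoid M'] [FunLike F M M'] [AddHomClass F M M']
    (f : F) {x y : M} (h : IsSummand x y) : IsSummand (f x) (f y) := by
  obtain ⟨r, rfl⟩ := h
  exact ⟨f r, map_add f x r⟩

theorem IsSummand.sum {κ : Type*} {s : Finset κ} {f g : κ → M}
    (h : ∀ i ∈ s, IsSummand (f i) (g i)) : IsSummand (∑ i ∈ s, f i) (∑ i ∈ s, g i) := by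
  choose! r hr using h
  exact ⟨∑ i ∈ s, r i, by rw [← Finset.sum_add_distrib]; exact Finset.sum_congr rfl hr⟩

theorem isSummand_sum_of_mem {κ : Type*} {s : Finset κ} {i : κ} (hi : i ∈ s) (f : κ → M) :
    IsSummand (f i) (∑ j ∈ s, f j) := by
  classical
  exact ⟨_, (Finset.add_sum_erase s f hi).symm⟩

theorem IsSummand.eq_zero (hpos : ∀ a b : M, a + b = 0 → a = 0 ∧ b = 0) {x : M}
    (h : IsSummand x 0) : x = 0 :=
  let ⟨r, hr⟩ := h
  (hpos x r hr.symm).1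

end IsSummand

theorem map_zero_of_iterate_eq_zero {M : Type*} [Zero M] {f : M → M} {p : ℕ}
    (hf : f^[p] = fun _ => 0) : f 0 = 0 :=
  calc f 0 = f (f^[p] 0) := by rw [hf]
    _ = f^[p] (f 0) := by rw [← Function.iterate_succ_apply' f p 0, Function.iterate_succ_apply]
    _ = 0 := by rw [hf]

namespace FlowEqn

variable {ι M : Type*} [AddCommMonoid M] (N : Finset ι) (e : ι → ι → M →+ M)

/-- Sum over the paths in `N` from `a` to `b` with `k + 1` edges of the composed edge maps. -/
def pathSum : ℕ → ι → ι → M →+ M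
  | 0 => e
  | k + 1 => fun a b => ∑ n ∈ N, (e n b).comp (pathSum k a n)

def unfoldedInflow (inf : ι → M) : ℕ → ι → M
  | 0 => inf
  | k + 1 => fun n => inf n + ∑ n' ∈ N, e n' n (unfoldedInflow inf k n')

def totalEdge : M →+ M := ∑ q ∈ N ×ˢ N, e q.1 q.2

variable {N e}

theorem eq_unfoldedInflow_add_pathSum {inf flo : ι → M}
    (h : FlowEqn N (fun a b => e a b) inf flo) (k : ℕ) :
    ∀ n ∈ N, flo n = unfoldedInflow N e inf k n + ∑ n' ∈ N, pathSum N e k n' n (flo n') := by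
  induction k with
  | zero => exact h
  | succ k ih =>
    intro n hn
    calc flo n = inf n + ∑ n' ∈ N, e n' n (flo n') := h n hn
      _ = inf n + ∑ n' ∈ N, e n' n
            (unfoldedInflow N e inf k n' + ∑ n'' ∈ N, pathSum N e k n'' n' (flo n'')) := by
          congr 1
          exact Finset.sum_congr rfl fun n' hn' => by rw [← ih n' hn']
      _ = unfoldedInflow N e inf (k + 1) n
            + ∑ n'' ∈ N, ∑ n' ∈ N, e n' n (pathSum N e k n'' n' (flo n'')) := by
          simp only [map_add, map_sum, Finset.sum_add_distrib, add_assoc, unfoldedInflow]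
          rw [Finset.sum_comm]
      _ = unfoldedInflow N e inf (k + 1) n
            + ∑ n'' ∈ N, pathSum N e (k + 1) n'' n (flo n'') := by
          simp only [pathSum, AddMonoidHom.finsetSum_apply, AddMonoidHom.comp_apply]

theorem isSummand_sum_edge_totalEdge {b : ι} (hb : b ∈ N) (m : M) :
    IsSummand (∑ a ∈ N, e a b m) (totalEdge N e m) := by
  rw [totalEdge, AddMonoidHom.finsetSum_apply, Finset.sum_product_right]
  exact isSummand_sum_of_mem hb fun b => ∑ a ∈ N, e a b m

theorem isSummand_pathSum_iterate_totalEdge (k : ℕ) {a b : ι} (ha : a ∈ N) (hb : b ∈ N)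
    (m : M) :
    IsSummand (pathSum N e k a b m) ((⇑(totalEdge N e))^[k + 1] m) := by
  induction k generalizing b with
  | zero =>
    exact (isSummand_sum_of_mem ha fun a => e a b m).trans (isSummand_sum_edge_totalEdge hb m)
  | succ k ih =>
    rw [Function.iterate_succ_apply']
    have hpaths : IsSummand (pathSum N e (k + 1) a b m)
        (∑ n ∈ N, e n b ((⇑(totalEdge N e))^[k + 1] m)) := by
      simp only [pathSum, AddMonoidHom.finsetSum_apply, AddMonoidHom.comp_apply]
      exact IsSummand.sum fun n hn => (ih hn).map (e n b)
    exact hpaths.trans (isSummand_sum_edge_totalEdge hb _)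

theorem pathSum_eq_zero (hpos : ∀ a b : M, a + b = 0 → a = 0 ∧ b = 0) {k : ℕ}
    (hk : (⇑(totalEdge N e))^[k + 1] = fun _ => 0) {a b : ι} (ha : a ∈ N) (hb : b ∈ N)
    (m : M) : pathSum N e k a b m = 0 := by
  have h := isSummand_pathSum_iterate_totalEdge (e := e) k ha hb m
  rw [hk] at h
  exact h.eq_zero hpos

theorem eq_of_iterate_totalEdge_eq_zero (hpos : ∀ a b : M, a + b = 0 → a = 0 ∧ b = 0) {k : ℕ}
    (hk : (⇑(totalEdge N e))^[k + 1] = fun _ => 0) {inf flo₁ flo₂ : ι → M}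
    (h₁ : FlowEqn N (fun a b => e a b) inf flo₁)
    (h₂ : FlowEqn N (fun a b => e a b) inf flo₂) :
    ∀ n ∈ N, flo₁ n = flo₂ n := by
  have hdet : ∀ flo, FlowEqn N (fun a b => e a b) inf flo →
      ∀ n ∈ N, flo n = unfoldedInflow N e inf k n := by
    intro flo h n hn
    rw [eq_unfoldedInflow_add_pathSum h k n hn,
      Finset.sum_eq_zero fun n' hn' => pathSum_eq_zero hpos hk hn' hn (flo n'),
      add_zero]
  intro n hn
  rw [hdet flo₁ h₁ n hn, hdet flo₂ h₂ n hn]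

end FlowEqn

theorem stmt10_general {ι M : Type*} [AddCommMonoid M]
    (hpos : ∀ a b : M, a + b = 0 → a = 0 ∧ b = 0)
    (E : Set (M → M))
    (hEendo : ∀ f ∈ E, ∀ a b : M, f (a + b) = f a + f b)
    (hEadd : ∀ f ∈ E, ∀ g ∈ E, (fun m => f m + g m) ∈ E)
    (hnil : ∃ p : ℕ, 1 < p ∧ ∀ f ∈ E, f^[p] = fun _ => (0 : M))
    (N : Finset ι) (e : ι → ι → M → M) (hE : ∀ a b, e a b ∈ E)
    (inf : ι → M) :
    ∀ flo1 flo2 : ι → M, FlowEqn N e inf flo1 → FlowEqn N e inf flo2 →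
      ∀ n ∈ N, flo1 n = flo2 n := by
  obtain ⟨p, hp, hnil⟩ := hnil
  obtain ⟨k, rfl⟩ : ∃ k, p = k + 1 := ⟨p - 1, by omega⟩
  intro flo1 flo2 h1 h2 n hn
  let e' : ι → ι → M →+ M := fun a b =>
    { toFun := e a b
      map_zero' := map_zero_of_iterate_eq_zero (hnil _ (hE a b))
      map_add' := hEendo _ (hE a b) }
  have htotal : ⇑(FlowEqn.totalEdge N e') ∈ E := by
    rw [FlowEqn.totalEdge, AddMonoidHom.coe_finsetSum]
    exact Finset.sum_induction_nonempty _ (· ∈ E) (fun f g hf hg => hEadd f hf g hg)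
      ⟨(n, n), Finset.mem_product.mpr ⟨hn, hn⟩⟩ fun q _ => hE q.1 q.2
  exact FlowEqn.eq_of_iterate_totalEdge_eq_zero hpos (hnil _ htotal) h1 h2 n hn

/-- Nilpotent edge functions give unique flows: if the (closed) set of
endomorphism edge functions is nilpotent, then for every graph and inflow there
is at most one flow satisfying the flow equation. -/
theorem stmt10 {ι M : Type*} [AddCommMonoid M]
    (hpos : ∀ a b : M, a + b = 0 → a = 0 ∧ b = 0)
    (hcanc : ∀ a b c : M, a + b = a + c → b = c)
    (E : Set (M → M))
    (hEendo : ∀ f ∈ E, ∀ a b : M, f (a + b) = f a + f b)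
    (hEcomp : ∀ f ∈ E, ∀ g ∈ E, (f ∘ g) ∈ E)
    (hEadd : ∀ f ∈ E, ∀ g ∈ E, (fun m => f m + g m) ∈ E)
    (hnil : ∃ p : ℕ, 1 < p ∧ ∀ f ∈ E, f^[p] = fun _ => (0 : M))
    (N : Finset ι) (e : ι → ι → M → M) (hE : ∀ a b, e a b ∈ E)
    (inf : ι → M) :
    ∀ flo1 flo2 : ι → M, FlowEqn N e inf flo1 → FlowEqn N e inf flo2 →
      ∀ n ∈ N, flo1 n = flo2 n :=
  stmt10_general hpos E hEendo hEadd hnil N e hE inf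
end

section
/- Replacement theorem: if I = I1 ⊕ I2 are valid flow interfaces, I1 ≲ I1' (contextual extension), the domains of I1' and I2 are disjoint, and for every node n in dom(I1') \ dom(I1) the outflow of I2 at n is 0, then I1' ⊕ I2 is defined, and I ≲ I1' ⊕ I2. -/
/-- Contextual extension I ≲ I'. -/
def IntfLe {ι M : Type*} (I I' : Intf ι M) : Prop :=
  I.dom ⊆ I'.dom ∧ (∀ n ∈ I.dom, I.inflow n = I'.inflow n) ∧
  (∀ n ∉ I'.dom, I.outflow n = I'.outflow n)
/-- The result of replacing `I1` by `I1'` in a composition `I = I1 ⊕ I2`. Its inflow is `I`'s on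
`dom I` and `I1'`'s on the new nodes of `I1'`, where `I2` sends no flow. -/
def Intf.replace {ι M : Type*} [AddCommMonoid M] [DecidableEq ι] (I I1' I2 : Intf ι M) :
    Intf ι M where
  dom := I1'.dom ∪ I2.dom
  inflow := I.dom.piecewise I.inflow I1'.inflow
  outflow := I1'.outflow + I2.outflow

namespace IntComp

variable {ι M : Type*} [AddCommMonoid M] [DecidableEq ι] {I1 I2 I I1' : Intf ι M}

theorem replace (hcomp : IntComp I1 I2 I) (hle : IntfLe I1 I1')
    (hdisj : Disjoint I1'.dom I2.dom) (hout : ∀ n ∈ I1'.dom, n ∉ I1.dom → I2.outflow n = 0) :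
    IntComp I1' I2 (I.replace I1' I2) := by
  obtain ⟨-, hdom, hin1, hin2, -⟩ := hcomp
  obtain ⟨-, hinle, houtle⟩ := hle
  refine ⟨hdisj, rfl, fun n hn => ?_, fun n hn => ?_, fun n _ => rfl⟩
  · have hn2 : n ∉ I2.dom := Finset.disjoint_left.mp hdisj hn
    by_cases hn1 : n ∈ I1.dom
    · have hnI : n ∈ I.dom := hdom ▸ Finset.mem_union_left _ hn1
      simp only [Intf.replace, Finset.piecewise_eq_of_mem _ _ _ hnI]
      rw [← hinle n hn1, hin1 n hn1]
    · have hnI : n ∉ I.dom := by simp [hdom, hn1, hn2]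
      simp only [Intf.replace, Finset.piecewise_eq_of_notMem _ _ _ hnI]
      rw [hout n hn hn1, add_zero]
  · have hnI : n ∈ I.dom := hdom ▸ Finset.mem_union_right _ hn
    simp only [Intf.replace, Finset.piecewise_eq_of_mem _ _ _ hnI]
    rw [hin2 n hn, houtle n (Finset.disjoint_right.mp hdisj hn)]

theorem intfLe_replace (hcomp : IntComp I1 I2 I) (hle : IntfLe I1 I1') :
    IntfLe I (I.replace I1' I2) := by
  obtain ⟨-, hdom, -, -, houtI⟩ := hcomp
  obtain ⟨hsub, -, houtle⟩ := hle
  refine ⟨hdom ▸ Finset.union_subset_union_left hsub,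
    fun n hn => (Finset.piecewise_eq_of_mem _ _ _ hn).symm, fun n hn => ?_⟩
  simp only [Intf.replace, Finset.mem_union, not_or] at hn
  obtain ⟨hn1', hn2⟩ := hn
  have hn1 : n ∉ I1.dom := fun h => hn1' (hsub h)
  have hnI : n ∉ I.dom := by simp [hdom, hn1, hn2]
  rw [houtI n hnI, houtle n hn1']
  rfl

end IntComp

theorem stmt14_general {ι M : Type*} [AddCommMonoid M] [DecidableEq ι]
    (I1 I2 I I1' : Intf ι M)
    (hcomp : IntComp I1 I2 I) (hle : IntfLe I1 I1')
    (hdisj : Disjoint I1'.dom I2.dom)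
    (hout : ∀ n ∈ I1'.dom, n ∉ I1.dom → I2.outflow n = 0) :
    ∃ I' : Intf ι M, IntComp I1' I2 I' ∧ IntfLe I I' :=
  ⟨I.replace I1' I2, hcomp.replace hle hdisj hout, hcomp.intfLe_replace hle⟩

/-- Replacement theorem: if I = I1 ⊕ I2, I1 ≲ I1', the domains of I1' and I2 are
disjoint, and I2 has outflow 0 at every new node of I1', then I1' ⊕ I2 is defined
and contextually extends I. -/
theorem stmt14 {ι M : Type*} [AddCommMonoid M] [DecidableEq ι]
    (hcanc : ∀ a b c : M, a + b = a + c → b = c)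
    (I1 I2 I I1' : Intf ι M)
    (hcomp : IntComp I1 I2 I) (hle : IntfLe I1 I1')
    (hdisj : Disjoint I1'.dom I2.dom)
    (hout : ∀ n ∈ I1'.dom, n ∉ I1.dom → I2.outflow n = 0) :
    ∃ I' : Intf ι M, IntComp I1' I2 I' ∧ IntfLe I I' :=
  stmt14_general I1 I2 I I1' hcomp hle hdisj hout
end
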